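/- Every nonempty compact metric space is the continuous image of Cantor's ternary set: for any nonempty compact metric space X there exists a continuous surjection f : C → X. -/

import Mathlib

/-- Cantor's ternary set `C = { Σ_{n ≥ 1} ω_n / 3^n : ω_n ∈ {0, 2} }`, as a subset of `ℝ`
with the Euclidean (subspace) topology. -/
def cantorC : Set ℝ :=
  {x | ∃ ω : ℕ → ℝ, (∀ n, ω n = 0 ∨ ω n = 2) ∧ HasSum (fun n => ω n / 3 ^ (n + 1)) x}

open Real

theorem Real.hasSum_ofDigits {b : ℕ} (a : ℕ → Fin b) :
    HasSum (fun n => (a n : ℝ) / b ^ (n + 1)) (ofDigits a) := by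
  have h : HasSum (ofDigitsTerm a) (ofDigits a) := summable_ofDigitsTerm.hasSum
  convert h using 2 with n
  simp [ofDigitsTerm, div_eq_mul_inv]

theorem cantorC_eq_cantorSet : cantorC = cantorSet := by
  ext x
  rw [cantorSet_eq_zero_two_ofDigits]
  constructor
  · rintro ⟨ω, hω, hx⟩
    refine ⟨fun n => if ω n = 0 then 0 else 2, fun n => by dsimp only; split_ifs <;> decide, ?_⟩
    refine (hasSum_ofDigits _).unique (hx.congr_fun fun n => ?_)
    rcases hω n with h | h <;> simp [h]
  · rintro ⟨a, ha, rfl⟩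
    refine ⟨fun n => a n, fun n => ?_, by exact_mod_cast hasSum_ofDigits a⟩
    show ((a n : ℕ) : ℝ) = 0 ∨ ((a n : ℕ) : ℝ) = 2
    have hd := ha n
    generalize a n = d at hd ⊢
    fin_cases d <;> simp_all

/-- Hausdorff–Alexandroff: every nonempty compact metric space is a continuous image of `C`. -/
theorem hausdorff_alexandroff {X : Type*} [MetricSpace X] [CompactSpace X] [Nonempty X] :
    ∃ f : cantorC → X, Continuous f ∧ Function.Surjective f := by
  obtain ⟨f, hf, hfs⟩ := exists_nat_bool_continuous_surjective_of_compact X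
  rw [cantorC_eq_cantorSet]
  exact ⟨f ∘ cantorSetHomeomorphNatToBool, hf.comp (Homeomorph.continuous _),
    hfs.comp (Homeomorph.surjective _)⟩
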